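/- For every positive integer n, the sum over 4-tuples (a,b,c,d) with 1 ≤ a ≤ n+1, 2 ≤ b ≤ n+1, and 1 ≤ d ≤ c ≤ n of q^{(a-1)+(b-1)+(c-1)+(d-1)} equals (q + q^2) times the square of the q-binomial coefficient [n+1 choose 2]_q. -/

import Mathlib

/-- The field of rational functions in q over ℚ. -/
noncomputable def q : RatFunc ℚ := RatFunc.X

/-- The q-analogue [m]_q = 1 + q + ... + q^{m-1}. -/
noncomputable def qa (m : ℕ) : RatFunc ℚ := ∑ j ∈ Finset.range m, q ^ j

/-!
The region is `[1, n+1] × [2, n+1] × {1 ≤ d ≤ c ≤ n}` and the weight is multiplicative, so the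
sum factors as `[n+1]_q · q[n]_q · S`, where `S` is the sum over the staircase. Summing the
staircase row by row, `(1 + q) S = [n+1]_q [n]_q` follows by induction from
`(1 + q) q^n [n+1]_q = [n+2]_q [n+1]_q - [n+1]_q [n]_q`.
-/

open Finset

section GeomSums

variable {R : Type*} [CommSemiring R] (x : R)

theorem sum_Icc_one_pow_sub_one (m : ℕ) :
    ∑ a ∈ Icc 1 m, x ^ (a - 1) = ∑ j ∈ range m, x ^ j := by
  induction m with
  | zero => simp
  | succ m ih => rw [sum_Icc_succ_top (by omega), ih, sum_range_succ, Nat.add_sub_cancel]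

theorem sum_Icc_two_pow_sub_one (n : ℕ) :
    ∑ b ∈ Icc 2 (n + 1), x ^ (b - 1) = x * ∑ j ∈ range n, x ^ j := by
  induction n with
  | zero => simp
  | succ n ih =>
    rw [sum_Icc_succ_top (by omega), ih, sum_range_succ, Nat.add_sub_cancel, mul_add, pow_succ']

/-- `[n+1 choose 2]_x` as a staircase sum, with `1 + x` cleared so that no division occurs. -/
theorem one_add_mul_sum_staircase (n : ℕ) :
    (1 + x) * ∑ c ∈ Icc 1 n, x ^ (c - 1) * ∑ d ∈ Icc 1 c, x ^ (d - 1) =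
      (∑ j ∈ range (n + 1), x ^ j) * ∑ j ∈ range n, x ^ j := by
  simp_rw [sum_Icc_one_pow_sub_one]
  induction n with
  | zero => simp
  | succ n ih =>
    rw [sum_Icc_succ_top (by omega), mul_add, ih, Nat.add_sub_cancel]
    simp only [sum_range_succ]
    ring

theorem sum_staircase_pow (n : ℕ) :
    ∑ p ∈ (Icc 1 n ×ˢ Icc 1 n).filter (fun p : ℕ × ℕ => p.2 ≤ p.1), x ^ ((p.1 - 1) + (p.2 - 1)) =
      ∑ c ∈ Icc 1 n, x ^ (c - 1) * ∑ d ∈ Icc 1 c, x ^ (d - 1) := by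
  rw [sum_filter, sum_product]
  refine sum_congr rfl fun c hc => ?_
  have hIcc : (Icc 1 n).filter (· ≤ c) = Icc 1 c := by
    ext d
    simp only [mem_filter, mem_Icc] at hc ⊢
    omega
  rw [← sum_filter, hIcc, mul_sum]
  simp_rw [pow_add]

end GeomSums

theorem one_add_q_ne_zero : (1 + q : RatFunc ℚ) ≠ 0 := by
  have : (1 + q : RatFunc ℚ) = algebraMap (Polynomial ℚ) (RatFunc ℚ) (1 + Polynomial.X) := by
    simp [q, RatFunc.algebraMap_X]
  rw [this]
  refine RatFunc.algebraMap_ne_zero fun h => ?_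
  simpa using congrArg (Polynomial.coeff · 0) h

theorem taxicab_qcount_rect_triangle_general (n : ℕ) :
    (∑ p ∈ (Finset.Icc 1 (n + 1) ×ˢ Finset.Icc 2 (n + 1) ×ˢ
              Finset.Icc 1 n ×ˢ Finset.Icc 1 n).filter
        (fun p : ℕ × ℕ × ℕ × ℕ => p.2.2.2 ≤ p.2.2.1),
        q ^ ((p.1 - 1) + (p.2.1 - 1) + (p.2.2.1 - 1) + (p.2.2.2 - 1)))
      = (q + q ^ 2) * (qa (n + 1) * qa n / (1 + q)) ^ 2 := by
  set T := (Icc 1 n ×ˢ Icc 1 n).filter (fun p : ℕ × ℕ => p.2 ≤ p.1)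
  have hsplit : (Icc 1 (n + 1) ×ˢ Icc 2 (n + 1) ×ˢ Icc 1 n ×ˢ Icc 1 n).filter
      (fun p : ℕ × ℕ × ℕ × ℕ => p.2.2.2 ≤ p.2.2.1) = Icc 1 (n + 1) ×ˢ Icc 2 (n + 1) ×ˢ T := by
    rw [filter_product_right (fun r : ℕ × ℕ × ℕ => r.2.2 ≤ r.2.1),
      filter_product_right (fun r : ℕ × ℕ => r.2 ≤ r.1)]
  have hstair : ∑ p ∈ T, q ^ ((p.1 - 1) + (p.2 - 1)) = qa (n + 1) * qa n / (1 + q) := by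
    rw [eq_div_iff one_add_q_ne_zero, mul_comm, sum_staircase_pow, one_add_mul_sum_staircase]
    rfl
  calc _ = (∑ a ∈ Icc 1 (n + 1), q ^ (a - 1)) * ((∑ b ∈ Icc 2 (n + 1), q ^ (b - 1)) *
          ∑ p ∈ T, q ^ ((p.1 - 1) + (p.2 - 1))) := by
        simp_rw [hsplit, sum_product, sum_mul_sum, mul_sum, add_assoc, pow_add]
    _ = qa (n + 1) * (q * qa n * (qa (n + 1) * qa n / (1 + q))) := by
        rw [hstair, sum_Icc_one_pow_sub_one, sum_Icc_two_pow_sub_one]; rfl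
    _ = _ := by field_simp [one_add_q_ne_zero]

theorem taxicab_qcount_rect_triangle (n : ℕ) (hn : 0 < n) :
    (∑ p ∈ (Finset.Icc 1 (n + 1) ×ˢ Finset.Icc 2 (n + 1) ×ˢ
              Finset.Icc 1 n ×ˢ Finset.Icc 1 n).filter
        (fun p : ℕ × ℕ × ℕ × ℕ => p.2.2.2 ≤ p.2.2.1),
        q ^ ((p.1 - 1) + (p.2.1 - 1) + (p.2.2.1 - 1) + (p.2.2.2 - 1)))
      = (q + q ^ 2) * (qa (n + 1) * qa n / (1 + q)) ^ 2 :=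
  taxicab_qcount_rect_triangle_general n
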